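/- arXiv:1310.1900 — 3 statements merged into one kernel-verified Lean document; each statement's English description precedes it below -/
import Mathlib

section
/- Let k be a commutative ring, R a commutative k-algebra, I an ideal of R, and r a natural number. Consider the canonical map Ω^1_{R/k} → Ω^1_{(R/I^(2r))/k} induced by functoriality of Kähler differentials along the quotient homomorphism R → R/I^(2r), viewed as an R-linear map by restricting scalars on the target. Then the kernel of this map is contained in the submodule I^r • Ω^1_{R/k}. -/
open KaehlerDifferential

set_option maxHeartbeats 800000
set_option synthInstance.maxHeartbeats 80000

/-- Auxiliary: if `J` is an ideal with `D(J) ⊆ N` and `J • Ω ⊆ N`, then the kernel of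
`Ω[R⁄k] → Ω[(R⧸J)⁄k]` is contained in `N`. -/
theorem aux_ker_kaehler_le
    (k R : Type*) [CommRing k] [CommRing R] [Algebra k R]
    (J : Ideal R) (N : Submodule R (Ω[R⁄k]))
    (hD : ∀ a ∈ J, KaehlerDifferential.D k R a ∈ N)
    (hJN : ∀ a ∈ J, ∀ x : Ω[R⁄k], a • x ∈ N) :
    LinearMap.ker (KaehlerDifferential.map k k R (R ⧸ J)) ≤ N := by
  classical
  set B := R ⧸ J
  set M := Ω[R⁄k] ⧸ N
  set π : Ω[R⁄k] →ₗ[R] M := N.mkQ with hπ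
  have hsurj : Function.Surjective (Ideal.Quotient.mk J) := Ideal.Quotient.mk_surjective
  have hT : Module.IsTorsionBySet R M (J : Set R) := by
    rw [Module.isTorsionBySet_quotient_iff]
    intro x a ha
    exact hJN a ha x
  letI : Module B M := hT.module
  haveI : IsScalarTower k B M := Module.IsTorsionBySet.isScalarTower hT
  haveI : IsScalarTower R B M := Module.IsTorsionBySet.isScalarTower hT
  have hmk_smul : ∀ (a : R) (x : M), (Ideal.Quotient.mk J a) • x = a • x :=
    fun a x => Module.IsTorsionBySet.mk_smul hT a x
  -- the well-definedness lemma
  have hlift : ∀ a b : R, Ideal.Quotient.mk J a = Ideal.Quotient.mk J b →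
      π (KaehlerDifferential.D k R a) = π (KaehlerDifferential.D k R b) := by
    intro a b hab
    rw [Ideal.Quotient.mk_eq_mk_iff_sub_mem] at hab
    have h1 := hD _ hab
    rw [map_sub] at h1
    show Submodule.Quotient.mk _ = Submodule.Quotient.mk _
    exact (Submodule.Quotient.eq N).mpr h1
  set δfun : B → M := fun b =>
    π (KaehlerDifferential.D k R (Function.surjInv hsurj b)) with hδfun
  have hδ : ∀ a : R, δfun (Ideal.Quotient.mk J a) = π (KaehlerDifferential.D k R a) := by
    intro a
    exact hlift _ _ (Function.surjInv_eq hsurj _)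
  let δ : Derivation k B M :=
    { toFun := δfun
      map_add' := by
        intro x y
        obtain ⟨a, rfl⟩ := hsurj x
        obtain ⟨b, rfl⟩ := hsurj y
        rw [← map_add, hδ, hδ, hδ, map_add, map_add]
      map_smul' := by
        intro c x
        obtain ⟨a, rfl⟩ := hsurj x
        have h1 : c • (Ideal.Quotient.mk J a) = Ideal.Quotient.mk J (c • a) := by
          exact (map_smul (Ideal.Quotient.mkₐ k J) c a).symm
        show δfun _ = _ • δfun _
        rw [h1, hδ, hδ, Derivation.map_smul, RingHom.id_apply, LinearMap.map_smul_of_tower]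
      map_one_eq_zero' := by
        show δfun 1 = 0
        have : (1 : B) = Ideal.Quotient.mk J 1 := rfl
        rw [this, hδ, Derivation.map_one_eq_zero, map_zero]
      leibniz' := by
        intro x y
        obtain ⟨a, rfl⟩ := hsurj x
        obtain ⟨b, rfl⟩ := hsurj y
        show δfun _ = _ • δfun _ + _ • δfun _
        rw [← map_mul, hδ, hδ, hδ, Derivation.leibniz, map_add, map_smul, map_smul,
          hmk_smul, hmk_smul] }
  have hδ' : ∀ a : R, δ (Ideal.Quotient.mk J a) = π (KaehlerDifferential.D k R a) := hδ
  set g : Ω[B⁄k] →ₗ[B] M := δ.liftKaehlerDifferential with hg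
  have key : ∀ y : Ω[R⁄k], π y = g (KaehlerDifferential.map k k R B y) := by
    intro y
    have hy : y ∈ Submodule.span R (Set.range (KaehlerDifferential.D k R)) := by
      rw [KaehlerDifferential.span_range_derivation]; trivial
    induction hy using Submodule.span_induction with
    | mem z hz =>
      obtain ⟨a, rfl⟩ := hz
      rw [KaehlerDifferential.map_D, Ideal.Quotient.algebraMap_eq,
        Derivation.liftKaehlerDifferential_comp_D, hδ']
    | zero => simp
    | add u v _ _ hu hv => rw [map_add, map_add, map_add, hu, hv]
    | smul c u _ hu =>
      have h2 : (KaehlerDifferential.map k k R B) (c • u) =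
          algebraMap R B c • (KaehlerDifferential.map k k R B u) := by
        rw [map_smul, algebraMap_smul]
      rw [map_smul, h2, map_smul, Ideal.Quotient.algebraMap_eq, hmk_smul, hu]
  intro x hx
  rw [LinearMap.mem_ker] at hx
  have : π x = 0 := by rw [key, hx, map_zero]
  rwa [hπ, ← LinearMap.mem_ker, Submodule.ker_mkQ] at this

/-- The kernel of the canonical map `Ω¹_{R/k} → Ω¹_{(R/I^(2r))/k}` (functoriality of Kähler
differentials along `R → R/I^(2r)`, an `R`-linear map) is contained in `I^r • Ω¹_{R/k}`. -/
theorem ker_kaehler_map_le_smul_top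
    (k R : Type*) [CommRing k] [CommRing R] [Algebra k R]
    (I : Ideal R) (r : ℕ) :
    LinearMap.ker (KaehlerDifferential.map k k R (R ⧸ I ^ (2 * r))) ≤
      I ^ r • (⊤ : Submodule R (Ω[R⁄k])) := by
  apply aux_ker_kaehler_le
  · intro a ha
    rw [two_mul, pow_add] at ha
    refine Submodule.mul_induction_on ha ?_ ?_
    · intro x hx y hy
      rw [Derivation.leibniz]
      exact add_mem (Submodule.smul_mem_smul hx trivial) (Submodule.smul_mem_smul hy trivial)
    · intro x y hx hy
      rw [map_add]
      exact add_mem hx hy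
  · intro a ha x
    have ha' : a ∈ I ^ r := Ideal.pow_le_pow_right (by omega) ha
    exact Submodule.smul_mem_smul ha' trivial
end

section
/- Let k be a commutative ring, R a commutative k-algebra, and I an ideal of R. For s ≥ 1 let π_s : Ω^1_{R/k} ⊗_R R/I^s → Ω^1_{(R/I^s)/k} denote the canonical surjective R-linear map induced by functoriality of Kähler differentials. Then for every r ≥ 1 there exists an R-linear map σ : Ω^1_{(R/I^(2r))/k} → Ω^1_{R/k} ⊗_R R/I^r such that: (i) the composite σ ∘ π_{2r} : Ω^1_{R/k} ⊗_R R/I^(2r) → Ω^1_{R/k} ⊗_R R/I^r equals the natural transition map induced by the projection R/I^(2r) → R/I^r; and (ii) the composite π_r ∘ σ : Ω^1_{(R/I^(2r))/k} → Ω^1_{(R/I^r)/k} equals the canonical map induced by the projection R/I^(2r) → R/I^r. (In other words, the canonical map of pro-R-modules {Ω^1_{R/k} ⊗_R R/I^r}_r → {Ω^1_{(R/I^r)/k}}_r is an isomorphism.) -/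
open TensorProduct

/-! The kernel of `π_s` consists of the elements `D a ⊗ 1` with `a ∈ I ^ s`. When `s = 2r`
such an `a` lies in `(I ^ r) ^ 2`, and by the Leibniz rule `D (m n) ⊗ 1 = D n ⊗ m + D m ⊗ n = 0`
in `Ω¹_{R/k} ⊗ R/I^r` for `m, n ∈ I ^ r`. Hence the transition map factors through the surjection
`π_{2r}`, which defines `σ`; the second identity then follows from the naturality of `π`. -/

/-- The canonical surjective `R`-linear map `Ω¹_{R/k} ⊗_R R/I^s → Ω¹_{(R/I^s)/k}`,
sending `ω ⊗ x` to `x • (map ω)`, induced by functoriality of Kähler differentials. -/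
noncomputable def kaehlerQuotPi (k R : Type*) [CommRing k] [CommRing R] [Algebra k R]
    (I : Ideal R) (s : ℕ) :
    (Ω[R⁄k] ⊗[R] (R ⧸ I ^ s)) →ₗ[R] Ω[(R ⧸ I ^ s)⁄k] :=
  ((KaehlerDifferential.mapBaseChange k R (R ⧸ I ^ s)).restrictScalars R) ∘ₗ
    (TensorProduct.comm R (Ω[R⁄k]) (R ⧸ I ^ s)).toLinearMap

namespace LinearMap

variable {R M N P : Type*} [Ring R] [AddCommGroup M] [AddCommGroup N] [AddCommGroup P]
  [Module R M] [Module R N] [Module R P]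

theorem exists_comp_eq_of_surjective_of_ker_le {f : M →ₗ[R] N} {g : M →ₗ[R] P}
    (hf : Function.Surjective f) (hfg : ker f ≤ ker g) : ∃ h : N →ₗ[R] P, h ∘ₗ f = g :=
  ⟨(ker f).liftQ g hfg ∘ₗ (f.quotKerEquivOfSurjective hf).symm.toLinearMap, by
    ext x
    simp [quotKerEquivOfSurjective_symm_apply]⟩

end LinearMap

namespace KaehlerDifferential

variable (k : Type*) {R : Type*} [CommRing k] [CommRing R] [Algebra k R]

theorem D_tmul_eq_zero_of_mem_sq {J : Ideal R} {a : R} (ha : a ∈ J ^ 2) (x : R ⧸ J) :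
    D k R a ⊗ₜ[R] x = 0 := by
  rw [sq] at ha
  have smul_x : ∀ m ∈ J, m • x = 0 := fun m hm => by
    rw [Algebra.smul_def, Ideal.Quotient.algebraMap_eq, Ideal.Quotient.eq_zero_iff_mem.mpr hm,
      zero_mul]
  refine Submodule.mul_induction_on ha (fun m hm n hn => ?_) fun a b ha hb => ?_
  · rw [Derivation.leibniz, add_tmul, smul_tmul, smul_tmul, smul_x m hm, smul_x n hn, tmul_zero,
      tmul_zero, add_zero]
  · rw [map_add, add_tmul, ha, hb, add_zero]

variable {k} {S : Type*} [CommRing S] [Algebra k S] [Algebra R S] [IsScalarTower k R S]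

theorem exists_tmul_D_eq_of_mapBaseChange_eq_zero (hS : Function.Surjective (algebraMap R S))
    {w : S ⊗[R] Ω[R⁄k]} (hw : mapBaseChange k R S w = 0) :
    ∃ a ∈ RingHom.ker (algebraMap R S), 1 ⊗ₜ D k R a = w := by
  obtain ⟨x, rfl⟩ := (exact_kerCotangentToTensor_mapBaseChange k R S hS w).mp hw
  obtain ⟨a, rfl⟩ := Ideal.toCotangent_surjective _ x
  exact ⟨a, a.2, rfl⟩

variable {T : Type*} [CommRing T] [Algebra k T] [Algebra R T] [Algebra S T]
  [IsScalarTower k R T] [IsScalarTower k S T] [IsScalarTower R S T]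

theorem map_map_apply (ω : Ω[R⁄k]) : map k k S T (map k k R S ω) = map k k R T ω := by
  have hω : ω ∈ Submodule.span R (Set.range (D k R)) := by
    rw [span_range_derivation]; trivial
  induction hω using Submodule.span_induction with
  | mem ω hω =>
    obtain ⟨a, rfl⟩ := hω
    simp [IsScalarTower.algebraMap_apply R S T]
  | zero => simp
  | add ω₁ ω₂ _ _ h₁ h₂ => simp [h₁, h₂]
  | smul c ω _ h =>
    rw [map_smul, ← algebraMap_smul S c, map_smul, h, algebraMap_smul, map_smul]

theorem map_mapBaseChange (u : S ⊗[R] Ω[R⁄k]) :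
    map k k S T (mapBaseChange k R S u) =
      mapBaseChange k R T ((IsScalarTower.toAlgHom R S T).toLinearMap.rTensor _ u) := by
  induction u using TensorProduct.induction_on with
  | zero => simp
  | tmul x ω => simp [map_map_apply, algebraMap_smul]
  | add u v hu hv => simp only [map_add, hu, hv]

end KaehlerDifferential

section kaehlerQuotPi

variable (k : Type*) {R : Type*} [CommRing k] [CommRing R] [Algebra k R] (I : Ideal R)

theorem kaehlerQuotPi_apply (s : ℕ) (w : Ω[R⁄k] ⊗[R] (R ⧸ I ^ s)) :
    kaehlerQuotPi k R I s w =
      KaehlerDifferential.mapBaseChange k R (R ⧸ I ^ s) (TensorProduct.comm R _ _ w) :=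
  rfl

theorem kaehlerQuotPi_surjective (s : ℕ) : Function.Surjective (kaehlerQuotPi k R I s) :=
  (KaehlerDifferential.mapBaseChange_surjective k R _ Ideal.Quotient.mk_surjective).comp
    (TensorProduct.comm R _ _).surjective

theorem ker_kaehlerQuotPi_le_ker_lTensor_mapQ {s t : ℕ} (hst : 2 * t ≤ s) :
    LinearMap.ker (kaehlerQuotPi k R I s) ≤ LinearMap.ker ((Submodule.mapQ (I ^ s) (I ^ t)
      LinearMap.id (Ideal.pow_le_pow_right (by omega))).lTensor Ω[R⁄k]) := by
  intro w hw
  obtain ⟨a, ha, hw⟩ := KaehlerDifferential.exists_tmul_D_eq_of_mapBaseChange_eq_zero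
    Ideal.Quotient.mk_surjective hw
  have ha : a ∈ (I ^ t) ^ 2 := by
    rw [← pow_mul, mul_comm]
    exact Ideal.pow_le_pow_right hst (Ideal.Quotient.eq_zero_iff_mem.mp ha)
  obtain rfl : KaehlerDifferential.D k R a ⊗ₜ 1 = w :=
    (TensorProduct.comm R _ _).injective (by rwa [comm_tmul])
  exact KaehlerDifferential.D_tmul_eq_zero_of_mem_sq k ha _

theorem map_kaehlerQuotPi {s t : ℕ} (hts : t ≤ s) [Algebra (R ⧸ I ^ s) (R ⧸ I ^ t)]
    [IsScalarTower R (R ⧸ I ^ s) (R ⧸ I ^ t)] [IsScalarTower k (R ⧸ I ^ s) (R ⧸ I ^ t)]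
    (w : Ω[R⁄k] ⊗[R] (R ⧸ I ^ s)) :
    KaehlerDifferential.map k k (R ⧸ I ^ s) (R ⧸ I ^ t) (kaehlerQuotPi k R I s w) =
      kaehlerQuotPi k R I t ((Submodule.mapQ (I ^ s) (I ^ t) LinearMap.id
        (Ideal.pow_le_pow_right hts)).lTensor Ω[R⁄k] w) := by
  have hmapQ : Submodule.mapQ (I ^ s) (I ^ t) LinearMap.id (Ideal.pow_le_pow_right hts) =
      (IsScalarTower.toAlgHom R (R ⧸ I ^ s) (R ⧸ I ^ t)).toLinearMap :=
    Submodule.linearMap_qext _ <| LinearMap.ext fun b =>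
      IsScalarTower.algebraMap_apply R (R ⧸ I ^ s) (R ⧸ I ^ t) b
  rw [kaehlerQuotPi_apply, kaehlerQuotPi_apply, KaehlerDifferential.map_mapBaseChange, hmapQ,
    LinearMap.rTensor_comm]

end kaehlerQuotPi

/-- The canonical pro-map `{Ω¹_{R/k} ⊗_R R/I^r}_r → {Ω¹_{(R/I^r)/k}}_r` is an isomorphism:
for each `r ≥ 1` there is `σ : Ω¹_{(R/I^(2r))/k} → Ω¹_{R/k} ⊗_R R/I^r` with
`σ ∘ π_{2r}` the natural transition map and `π_r ∘ σ` the canonical map induced by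
`R/I^(2r) → R/I^r`. -/
theorem pro_kaehler_tensor_iso (k R : Type*) [CommRing k] [CommRing R] [Algebra k R]
    (I : Ideal R) (r : ℕ) :
    letI : Algebra (R ⧸ I ^ (2 * r)) (R ⧸ I ^ r) :=
      RingHom.toAlgebra <| Ideal.quotientMap (I ^ r) (RingHom.id R)
        (by simpa using Ideal.pow_le_pow_right (by omega : r ≤ 2 * r))
    letI : IsScalarTower k (R ⧸ I ^ (2 * r)) (R ⧸ I ^ r) :=
      IsScalarTower.of_algebraMap_eq fun a => rfl
    letI : SMulCommClass k (R ⧸ I ^ (2 * r)) (R ⧸ I ^ r) :=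
      ⟨fun a b c => by simp only [Algebra.smul_def]; ring⟩
    ∃ σ : Ω[(R ⧸ I ^ (2 * r))⁄k] →ₗ[R] (Ω[R⁄k] ⊗[R] (R ⧸ I ^ r)),
      (∀ w : Ω[R⁄k] ⊗[R] (R ⧸ I ^ (2 * r)),
        σ (kaehlerQuotPi k R I (2 * r) w) =
          LinearMap.lTensor (Ω[R⁄k])
            (Submodule.mapQ (I ^ (2 * r)) (I ^ r) LinearMap.id
              (by simpa using Ideal.pow_le_pow_right (by omega : r ≤ 2 * r))) w) ∧
      (∀ w : Ω[(R ⧸ I ^ (2 * r))⁄k],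
        kaehlerQuotPi k R I r (σ w) =
          KaehlerDifferential.map k k (R ⧸ I ^ (2 * r)) (R ⧸ I ^ r) w) := by
  let : Algebra (R ⧸ I ^ (2 * r)) (R ⧸ I ^ r) :=
    (Ideal.quotientMap (I ^ r) (RingHom.id R) (Ideal.pow_le_pow_right (by omega))).toAlgebra
  have : IsScalarTower R (R ⧸ I ^ (2 * r)) (R ⧸ I ^ r) := .of_algebraMap_eq fun _ => rfl
  have : IsScalarTower k (R ⧸ I ^ (2 * r)) (R ⧸ I ^ r) := .of_algebraMap_eq fun _ => rfl
  obtain ⟨σ, hσ⟩ := LinearMap.exists_comp_eq_of_surjective_of_ker_le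
    (kaehlerQuotPi_surjective k I (2 * r)) (ker_kaehlerQuotPi_le_ker_lTensor_mapQ k I le_rfl)
  refine ⟨σ, LinearMap.congr_fun hσ, fun w => ?_⟩
  obtain ⟨w, rfl⟩ := kaehlerQuotPi_surjective k I (2 * r) w
  rw [map_kaehlerQuotPi k I (by omega), ← hσ, LinearMap.comp_apply]
end

section
/- Let k be a commutative ring, R a commutative k-algebra, I an ideal of R, n ≥ 1 and r a natural number. Let f : Ω^1_{R/k} → Ω^1_{(R/I^(2r))/k} be the canonical map induced by R → R/I^(2r), and let Λ^n f : ⋀^n_R Ω^1_{R/k} → ⋀^n_{R/I^(2r)} Ω^1_{(R/I^(2r))/k} be the R-linear map (target viewed as an R-module by restriction of scalars) determined on elementary wedges by ω_1 ∧ … ∧ ω_n ↦ f(ω_1) ∧ … ∧ f(ω_n). Then the kernel of Λ^n f is contained in I^r • ⋀^n_R Ω^1_{R/k}. -/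
open KaehlerDifferential in
/-- If `a ∈ I ^ (m + 1)` then `d a ∈ I ^ m • Ω`. -/
private lemma D_pow_mem_aux {k R : Type*} [CommRing k] [CommRing R] [Algebra k R]
    (I : Ideal R) (m : ℕ) : ∀ {a : R}, a ∈ I ^ (m + 1) →
    KaehlerDifferential.D k R a ∈ I ^ m • (⊤ : Submodule R (Ω[R⁄k])) := by
  induction m with
  | zero =>
    intro a _
    simp [pow_zero, Ideal.one_eq_top, Submodule.top_smul]
  | succ m ih =>
    intro a ha
    rw [pow_succ] at ha
    refine Submodule.mul_induction_on ha ?_ ?_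
    · intro b hb c hc
      rw [Derivation.leibniz]
      refine Submodule.add_mem _ ?_ ?_
      · exact Submodule.smul_mem_smul hb Submodule.mem_top
      · have hDb := ih hb
        have : I ^ (m + 1) • (⊤ : Submodule R (Ω[R⁄k])) =
            I • (I ^ m • (⊤ : Submodule R (Ω[R⁄k]))) := by
          rw [pow_succ', ← Submodule.smul_assoc, smul_eq_mul]
        rw [this]
        exact Submodule.smul_mem_smul hc hDb
    · intro x y hx hy
      rw [map_add]
      exact Submodule.add_mem _ hx hy

/-- Telescoping congruence for alternating maps modulo a submodule. -/
private lemma alt_congr_aux {R E Q : Type*} [CommRing R] [AddCommGroup E] [Module R E]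
    [AddCommGroup Q] [Module R Q] {n : ℕ} (g : E [⋀^Fin n]→ₗ[R] Q)
    (K : Submodule R E)
    (hg0 : ∀ (ω : Fin n → E) (i : Fin n) (x : E), x ∈ K → g (Function.update ω i x) = 0)
    (ω ω'' : Fin n → E) (h : ∀ i, ω i - ω'' i ∈ K) : g ω = g ω'' := by
  classical
  have key : ∀ s : Finset (Fin n), g (s.piecewise ω ω'') = g ω'' := by
    intro s
    induction s using Finset.induction_on with
    | empty => simp
    | @insert a s ha ih =>
      rw [Finset.piecewise_insert]
      have h1 : ω a = (s.piecewise ω ω'') a + (ω a - ω'' a) := by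
        rw [Finset.piecewise_eq_of_notMem _ _ _ ha]; abel
      rw [h1, g.map_update_add, hg0 _ _ _ (h a), add_zero, Function.update_eq_self, ih]
  have := key Finset.univ
  rwa [Finset.piecewise_univ] at this

/-- The kernel of `Ω[R⁄k] → Ω[(R ⧸ I ^ (2r))⁄k]` is contained in `I ^ r • Ω[R⁄k]`. -/
private lemma ker_kaehler_map_le_aux {k R : Type*} [CommRing k] [CommRing R] [Algebra k R]
    (I : Ideal R) (r : ℕ) (hr : 1 ≤ r) :
    LinearMap.ker (KaehlerDifferential.map k k R (R ⧸ I ^ (2 * r))) ≤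
      I ^ r • (⊤ : Submodule R (Ω[R⁄k])) := by
  classical
  set NE : Submodule R (Ω[R⁄k]) := I ^ r • ⊤ with hNE
  have htors : Module.IsTorsionBySet R ((Ω[R⁄k]) ⧸ NE) ((I ^ (2 * r) : Ideal R) : Set R) :=
    (Module.isTorsionBySet_quotient_iff _ _).mpr fun x c hc =>
      Submodule.smul_mem_smul (Ideal.pow_le_pow_right (by omega) hc) Submodule.mem_top
  letI : Module (R ⧸ I ^ (2 * r)) ((Ω[R⁄k]) ⧸ NE) := htors.module
  haveI : IsScalarTower k (R ⧸ I ^ (2 * r)) ((Ω[R⁄k]) ⧸ NE) :=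
    Module.IsTorsionBySet.isScalarTower htors
  haveI : IsScalarTower R (R ⧸ I ^ (2 * r)) ((Ω[R⁄k]) ⧸ NE) :=
    Module.IsTorsionBySet.isScalarTower htors
  -- the derivation `R → Ω/NE`
  let D' : Derivation k R ((Ω[R⁄k]) ⧸ NE) := NE.mkQ.compDer (KaehlerDifferential.D k R)
  have hJ0 : ∀ a ∈ I ^ (2 * r), KaehlerDifferential.D k R a ∈ NE := by
    intro a ha
    have h2r : 2 * r = (2 * r - 1) + 1 := by omega
    rw [h2r] at ha
    refine Submodule.smul_mono_left (Ideal.pow_le_pow_right (by omega)) (D_pow_mem_aux I _ ha)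
  -- descend to a linear map on the quotient
  have hker : (Submodule.restrictScalars k (I ^ (2 * r) : Ideal R)) ≤
      LinearMap.ker D'.toLinearMap := fun a ha => by
    rw [LinearMap.mem_ker]
    exact (Submodule.Quotient.mk_eq_zero NE).mpr (hJ0 a ha)
  let L := Submodule.liftQ (Submodule.restrictScalars k (I ^ (2 * r) : Ideal R))
    D'.toLinearMap hker
  let e := Submodule.Quotient.restrictScalarsEquiv k ((I ^ (2 * r) : Ideal R))
  let D'' : (R ⧸ I ^ (2 * r)) →ₗ[k] ((Ω[R⁄k]) ⧸ NE) := L ∘ₗ e.symm.toLinearMap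
  have hD'' : ∀ a : R, D'' (Ideal.Quotient.mk (I ^ (2 * r)) a) =
      NE.mkQ (KaehlerDifferential.D k R a) := by
    intro a
    have he : e.symm (Ideal.Quotient.mk (I ^ (2 * r)) a) = Submodule.Quotient.mk a := by
      apply e.injective
      rw [LinearEquiv.apply_symm_apply, Submodule.Quotient.restrictScalarsEquiv_mk]
      rfl
    show L (e.symm (Ideal.Quotient.mk (I ^ (2 * r)) a)) = _
    rw [he, Submodule.liftQ_apply]
    rfl
  -- the derivation on the quotient ring
  let δ : Derivation k (R ⧸ I ^ (2 * r)) ((Ω[R⁄k]) ⧸ NE) :=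
    { toLinearMap := D''
      map_one_eq_zero' := by
        show D'' 1 = 0
        rw [show (1 : R ⧸ I ^ (2 * r)) = Ideal.Quotient.mk (I ^ (2 * r)) 1 from (map_one _).symm,
          hD'']
        simp
      leibniz' := by
        intro a b
        obtain ⟨x, rfl⟩ := Ideal.Quotient.mk_surjective a
        obtain ⟨y, rfl⟩ := Ideal.Quotient.mk_surjective b
        show D'' _ = _ • D'' _ + _ • D'' _
        rw [← map_mul, hD'', hD'', hD'', Derivation.leibniz, map_add,
          Module.IsTorsionBySet.mk_smul htors, Module.IsTorsionBySet.mk_smul htors,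
          LinearMap.map_smul, LinearMap.map_smul] }
  let ψ := δ.liftKaehlerDifferential
  have hcomp : (ψ.restrictScalars R) ∘ₗ (KaehlerDifferential.map k k R (R ⧸ I ^ (2 * r)))
      = NE.mkQ := by
    apply LinearMap.ext_on (KaehlerDifferential.span_range_derivation k R)
    rintro _ ⟨a, rfl⟩
    show ψ (KaehlerDifferential.map k k R (R ⧸ I ^ (2 * r)) (KaehlerDifferential.D k R a)) = _
    rw [KaehlerDifferential.map_D, Derivation.liftKaehlerDifferential_comp_D]
    show D'' (algebraMap R (R ⧸ I ^ (2 * r)) a) = _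
    rw [Ideal.Quotient.algebraMap_eq, hD'']
  intro x hx
  rw [LinearMap.mem_ker] at hx
  have : NE.mkQ x = 0 := by
    rw [← hcomp]
    show ψ (KaehlerDifferential.map k k R (R ⧸ I ^ (2 * r)) x) = 0
    rw [hx, map_zero]
  rw [Submodule.mkQ_apply, Submodule.Quotient.mk_eq_zero] at this
  exact this

set_option maxHeartbeats 1000000 in
set_option synthInstance.maxHeartbeats 200000 in
/-- For `f : Ω¹_{R/k} → Ω¹_{(R/I^(2r))/k}` the canonical map, the kernel of the induced map
`Λⁿ f` on `n`-th exterior powers (determined on elementary wedges by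
`ω₁ ∧ ⋯ ∧ ωₙ ↦ f ω₁ ∧ ⋯ ∧ f ωₙ`) is contained in `I^r • ⋀ⁿ_R Ω¹_{R/k}`. -/
theorem ker_exteriorPower_kaehler_map_le_smul_top
    (k R : Type*) [CommRing k] [CommRing R] [Algebra k R]
    (I : Ideal R) (n r : ℕ) (hn : 1 ≤ n)
    (F : (⋀[R]^n (Ω[R⁄k])) →ₗ[R]
      (Submodule.restrictScalars R
        (⋀[R ⧸ I ^ (2 * r)]^n (Ω[(R ⧸ I ^ (2 * r))⁄k]))))
    (hF : ∀ ω : Fin n → Ω[R⁄k],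
      (F ⟨ExteriorAlgebra.ιMulti R n ω,
            ExteriorAlgebra.ιMulti_range R n (Set.mem_range_self ω)⟩ :
          ExteriorAlgebra (R ⧸ I ^ (2 * r)) (Ω[(R ⧸ I ^ (2 * r))⁄k])) =
        ExteriorAlgebra.ιMulti (R ⧸ I ^ (2 * r)) n
          (fun i => KaehlerDifferential.map k k R (R ⧸ I ^ (2 * r)) (ω i))) :
    LinearMap.ker F ≤ I ^ r • (⊤ : Submodule R (⋀[R]^n (Ω[R⁄k]))) := by
  classical
  rcases Nat.eq_zero_or_pos r with hr0 | hr
  · subst hr0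
    intro x _
    rw [pow_zero, Ideal.one_eq_top, Submodule.top_smul]
    trivial
  intro x hx
  -- notation
  set NQ : Submodule R (⋀[R]^n (Ω[R⁄k])) := I ^ r • ⊤ with hNQdef
  have htorsQ : Module.IsTorsionBySet R ((⋀[R]^n (Ω[R⁄k])) ⧸ NQ)
      ((I ^ (2 * r) : Ideal R) : Set R) :=
    (Module.isTorsionBySet_quotient_iff _ _).mpr fun y c hc =>
      Submodule.smul_mem_smul (Ideal.pow_le_pow_right (by omega) hc) Submodule.mem_top
  letI : Module (R ⧸ I ^ (2 * r)) ((⋀[R]^n (Ω[R⁄k])) ⧸ NQ) := htorsQ.module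
  haveI : IsScalarTower R (R ⧸ I ^ (2 * r)) ((⋀[R]^n (Ω[R⁄k])) ⧸ NQ) :=
    Module.IsTorsionBySet.isScalarTower htorsQ
  -- the alternating map into the quotient
  let galt : (Ω[R⁄k]) [⋀^Fin n]→ₗ[R] (⋀[R]^n (Ω[R⁄k])) :=
    (ExteriorAlgebra.ιMulti R n).codRestrict (⋀[R]^n (Ω[R⁄k]))
      (fun v => ExteriorAlgebra.ιMulti_range R n (Set.mem_range_self v))
  let g : (Ω[R⁄k]) [⋀^Fin n]→ₗ[R] ((⋀[R]^n (Ω[R⁄k])) ⧸ NQ) :=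
    NQ.mkQ.compAlternatingMap galt
  have hzero : ∀ c ∈ I ^ r, ∀ q : ((⋀[R]^n (Ω[R⁄k])) ⧸ NQ), c • q = 0 := by
    intro c hc q
    obtain ⟨y, rfl⟩ := Submodule.Quotient.mk_surjective _ q
    rw [← Submodule.Quotient.mk_smul, Submodule.Quotient.mk_eq_zero]
    exact Submodule.smul_mem_smul hc Submodule.mem_top
  have hg0 : ∀ (ω : Fin n → Ω[R⁄k]) (i : Fin n) (y : Ω[R⁄k]),
      y ∈ I ^ r • (⊤ : Submodule R (Ω[R⁄k])) → g (Function.update ω i y) = 0 := by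
    intro ω i y hy
    refine Submodule.smul_induction_on hy ?_ ?_
    · intro c hc m _
      rw [g.map_update_smul, hzero c hc]
    · intro a b hax hbx
      rw [g.map_update_add, hax, hbx, add_zero]
  have hstar : ∀ ω ω'' : Fin n → Ω[R⁄k],
      (∀ i, KaehlerDifferential.map k k R (R ⧸ I ^ (2 * r)) (ω i) =
        KaehlerDifferential.map k k R (R ⧸ I ^ (2 * r)) (ω'' i)) → g ω = g ω'' := by
    intro ω ω'' h
    refine alt_congr_aux g _ hg0 ω ω'' fun i => ?_
    refine ker_kaehler_map_le_aux I r hr ?_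
    rw [LinearMap.mem_ker, map_sub, h i, sub_self]
  -- a set-theoretic section of the surjective map on differentials
  have hfs : Function.Surjective (KaehlerDifferential.map k k R (R ⧸ I ^ (2 * r))) :=
    KaehlerDifferential.map_surjective_of_surjective k k R _
      (by rw [Ideal.Quotient.algebraMap_eq]; exact Ideal.Quotient.mk_surjective)
  let pre : (Ω[(R ⧸ I ^ (2 * r))⁄k]) → (Ω[R⁄k]) := Function.surjInv hfs
  have hpre : ∀ y, KaehlerDifferential.map k k R (R ⧸ I ^ (2 * r)) (pre y) = y :=
    fun y => Function.surjInv_eq hfs y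
  have hup : ∀ (ω' : Fin n → Ω[(R ⧸ I ^ (2 * r))⁄k]) (i : Fin n)
      (v : Ω[(R ⧸ I ^ (2 * r))⁄k]) (w : Ω[R⁄k]),
      KaehlerDifferential.map k k R (R ⧸ I ^ (2 * r)) w = v →
      g (fun j => pre (Function.update ω' i v j)) =
        g (Function.update (fun t => pre (ω' t)) i w) := by
    intro ω' i v w hw
    apply hstar
    intro j
    rcases eq_or_ne j i with rfl | hne
    · simp [hpre, hw]
    · simp [Function.update_of_ne hne, hpre]
  -- the alternating map over the quotient ring
  let α : (Ω[(R ⧸ I ^ (2 * r))⁄k]) [⋀^Fin n]→ₗ[R ⧸ I ^ (2 * r)]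
      ((⋀[R]^n (Ω[R⁄k])) ⧸ NQ) :=
    { toFun := fun ω' => g fun i => pre (ω' i)
      map_update_add' := by
        intro _inst ω' i y z
        have hi : _inst = instDecidableEqFin n := Subsingleton.elim _ _
        subst hi
        show g (fun j => pre (Function.update ω' i (y + z) j)) = _
        rw [hup ω' i (y + z) (pre y + pre z) (by rw [map_add, hpre, hpre]),
          g.map_update_add, ← hup ω' i y (pre y) (hpre y), ← hup ω' i z (pre z) (hpre z)]
      map_update_smul' := by
        intro _inst ω' i c y
        have hi : _inst = instDecidableEqFin n := Subsingleton.elim _ _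
        subst hi
        obtain ⟨a, rfl⟩ := Ideal.Quotient.mk_surjective c
        show g (fun j => pre (Function.update ω' i _ j)) = _
        rw [hup ω' i (Ideal.Quotient.mk (I ^ (2 * r)) a • y) (a • pre y)
            (by rw [map_smul, hpre, ← Ideal.Quotient.algebraMap_eq, algebraMap_smul]),
          g.map_update_smul, ← hup ω' i y (pre y) (hpre y),
          Module.IsTorsionBySet.mk_smul htorsQ]
      map_eq_zero_of_eq' := by
        intro ω' i j hij hne
        exact g.map_eq_zero_of_eq (fun t => pre (ω' t))
          (show pre (ω' i) = pre (ω' j) by rw [hij]) hne }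
  -- extend to the exterior algebra
  let fam : ∀ i : ℕ, (Ω[(R ⧸ I ^ (2 * r))⁄k]) [⋀^Fin i]→ₗ[R ⧸ I ^ (2 * r)]
      ((⋀[R]^n (Ω[R⁄k])) ⧸ NQ) := fun i => if h : n = i then h ▸ α else 0
  have hfam : fam n = α := by simp [fam]
  let Φ : ExteriorAlgebra (R ⧸ I ^ (2 * r)) (Ω[(R ⧸ I ^ (2 * r))⁄k]) →ₗ[R ⧸ I ^ (2 * r)]
      ((⋀[R]^n (Ω[R⁄k])) ⧸ NQ) := ExteriorAlgebra.liftAlternating fam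
  let G : (⋀[R]^n (Ω[R⁄k])) →ₗ[R] ((⋀[R]^n (Ω[R⁄k])) ⧸ NQ) :=
    ((Φ.restrictScalars R).comp
      ((Submodule.restrictScalars R
        (⋀[R ⧸ I ^ (2 * r)]^n (Ω[(R ⧸ I ^ (2 * r))⁄k]))).subtype)) ∘ₗ F
  have hspan : Submodule.span R (Set.range (⇑galt)) = ⊤ := by
    apply Submodule.map_injective_of_injective
      (Submodule.injective_subtype (⋀[R]^n (Ω[R⁄k])))
    rw [Submodule.map_span, Submodule.map_top, Submodule.range_subtype, ← Set.range_comp]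
    have hcomp : (⇑(⋀[R]^n (Ω[R⁄k])).subtype ∘ ⇑galt) = ⇑(ExteriorAlgebra.ιMulti R n) := by
      funext v; rfl
    rw [hcomp, ExteriorAlgebra.ιMulti_span_fixedDegree]
  have hG : G = NQ.mkQ := by
    apply LinearMap.ext_on hspan
    rintro _ ⟨ω, rfl⟩
    have h1 : galt ω = ⟨ExteriorAlgebra.ιMulti R n ω,
        ExteriorAlgebra.ιMulti_range R n (Set.mem_range_self ω)⟩ := Subtype.ext rfl
    show Φ ((F (galt ω) : ExteriorAlgebra (R ⧸ I ^ (2 * r)) (Ω[(R ⧸ I ^ (2 * r))⁄k])))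
      = NQ.mkQ (galt ω)
    rw [h1, hF ω]
    show Φ (ExteriorAlgebra.ιMulti (R ⧸ I ^ (2 * r)) n
      (fun i => KaehlerDifferential.map k k R (R ⧸ I ^ (2 * r)) (ω i))) = _
    rw [ExteriorAlgebra.liftAlternating_apply_ιMulti, hfam]
    show g (fun i => pre (KaehlerDifferential.map k k R (R ⧸ I ^ (2 * r)) (ω i))) = _
    rw [hstar _ ω (fun i => hpre _)]
    rfl
  -- conclude
  rw [LinearMap.mem_ker] at hx
  have h0 : NQ.mkQ x = 0 := by
    rw [← hG]
    show Φ ((F x : ExteriorAlgebra (R ⧸ I ^ (2 * r)) (Ω[(R ⧸ I ^ (2 * r))⁄k]))) = 0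
    rw [hx]
    rw [ZeroMemClass.coe_zero]
    exact map_zero Φ
  rw [Submodule.mkQ_apply, Submodule.Quotient.mk_eq_zero] at h0
  exact h0
end
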